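/- Let T be a rooted tree decomposition of G with root r such that the treewidth of G is at most k and |B_r| > 2(k+1). Then there exists a split of T, i.e., a good partition P = (C_1, C_2, C_3, S) of V together with a labeling function a from nodes of T to nonempty subsets of {1,2,3} such that for every node x: (a) if some C_i meets B_x then a(x) = {i : C_i ∩ B_x ≠ ∅}, otherwise a(x) is a singleton subset of a(p(x)); and (b) a(x) ⊆ a(p(x)). -/

import Mathlib

open SimpleGraph

/-- A rooted tree decomposition of a graph `G` with node type `ι`. -/
structure RootedTD (V : Type) (G : SimpleGraph V) (ι : Type) where
  T : SimpleGraph ι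
  tree : T.IsTree
  bag : ι → Finset V
  root : ι
  parent : ι → ι
  parent_root : parent root = root
  parent_adj : ∀ x, x ≠ root → T.Adj x (parent x)
  parent_reach : ∀ x, ∃ n, parent^[n] x = root
  vert_cover : ∀ v, ∃ x, v ∈ bag x
  edge_cover : ∀ ⦃u v⦄, G.Adj u v → ∃ x, u ∈ bag x ∧ v ∈ bag x
  conn : ∀ (v : V) (x y : ι) (w : T.Walk x y), w.IsPath →
      v ∈ bag x → v ∈ bag y → ∀ z ∈ w.support, v ∈ bag z

/-- The union of the bags in the subtree of D rooted at y. -/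
def RootedTD.Vsub {V : Type} {G : SimpleGraph V} {ι : Type}
    (D : RootedTD V G ι) (y : ι) : Set V :=
  {v | ∃ z, (∃ n, D.parent^[n] z = y) ∧ v ∈ D.bag z}

/-- A 4-partition (C 0, C 1, C 2, X) of a vertex set, where X is the separator part. -/
structure Part4 (V : Type) where
  C : Fin 3 → Set V
  X : Set V

/-- P is a partition of the set A. -/
def Part4.IsPartitionOf {V : Type} (P : Part4 V) (A : Set V) : Prop :=
  (∀ i j, i ≠ j → Disjoint (P.C i) (P.C j)) ∧
  (∀ i, Disjoint (P.C i) P.X) ∧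
  (P.X ∪ ⋃ i, P.C i) = A

/-- P is legal: no edge of G between distinct parts C i and C j. -/
def Part4.Legal {V : Type} (G : SimpleGraph V) (P : Part4 V) : Prop :=
  ∀ i j, i ≠ j → ∀ u ∈ P.C i, ∀ v ∈ P.C j, ¬ G.Adj u v

/-- Partitions P of A and Q of A' are compatible: they agree on A ∩ A'. -/
def Part4.Compatible {V : Type} (P Q : Part4 V) (A A' : Set V) : Prop :=
  ∀ v ∈ A ∩ A', (∀ i, (v ∈ P.C i ↔ v ∈ Q.C i)) ∧ (v ∈ P.X ↔ v ∈ Q.X)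

/-- The partition induced by P on a subset A. -/
def Part4.restrict {V : Type} (P : Part4 V) (A : Set V) : Part4 V :=
  ⟨fun i => P.C i ∩ A, P.X ∩ A⟩

/-- The size of a partition P of the bag of y: the minimum size of the separator
part over all legal partitions of V_y compatible with P. -/
noncomputable def psize {V ι : Type} (G : SimpleGraph V) (D : RootedTD V G ι)
    (y : ι) (P : Part4 V) : ℕ :=
  sInf {n | ∃ Q : Part4 V, Q.IsPartitionOf (D.Vsub y) ∧ Q.Legal G ∧
      Q.Compatible P (D.Vsub y) (D.bag y : Set V) ∧ Q.X.ncard = n}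

/-- The partition Py of the bag of y is good with respect to the partition Px of
the bag of the parent of y. -/
def GoodWrt {V ι : Type} (G : SimpleGraph V) (D : RootedTD V G ι)
    (y : ι) (Py Px : Part4 V) : Prop :=
  Py.IsPartitionOf (D.bag y : Set V) ∧ Py.Legal G ∧
  Py.Compatible Px (D.bag y : Set V) (D.bag (D.parent y) : Set V) ∧
  (∀ Q : Part4 V, Q.IsPartitionOf (D.bag y : Set V) → Q.Legal G →
      Q.Compatible Px (D.bag y : Set V) (D.bag (D.parent y) : Set V) →
      psize G D y Py ≤ psize G D y Q) ∧
  (∀ Q : Part4 V, Q.IsPartitionOf (D.bag y : Set V) → Q.Legal G →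
      Q.Compatible Px (D.bag y : Set V) (D.bag (D.parent y) : Set V) →
      psize G D y Q = psize G D y Py → Q.X.ncard ≤ Py.X.ncard)

/-- The partition Pr of the root bag is good. -/
def GoodRoot {V ι : Type} (G : SimpleGraph V) (D : RootedTD V G ι)
    (k : ℕ) (Pr : Part4 V) : Prop :=
  (∀ i, (Pr.C i).ncard + psize G D D.root Pr < (D.bag D.root).card) ∧
  psize G D D.root Pr ≤ k + 1

/-!
A tree decomposition of width at most `k` has a bag whose removal leaves pieces each containing
at most half of the root bag `B_r`. Packing these pieces into three classes gives a legal
partition of `V` with a separator of size at most `k + 1` in which every class meets at most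
half of `B_r`; its restriction to `B_r` is a good root partition. From the root downwards every
bag then receives a partition that is good with respect to its parent's, in which the classes
avoiding the parent bag are merged into a class the parent already uses, so that the labels
shrink along the tree. As the bags containing a vertex form a subtree, these bag partitions
agree on shared vertices and glue to a good partition of `V`.
-/

namespace Part4

variable {V : Type} {G : SimpleGraph V} {P Q : Part4 V} {A B : Set V}

lemma ext (hC : P.C = Q.C) (hX : P.X = Q.X) : P = Q := by
  cases P; cases Q; simp_all

lemma C_subset (h : P.IsPartitionOf A) (i : Fin 3) : P.C i ⊆ A := fun _ hv =>
  h.2.2 ▸ Or.inr (Set.mem_iUnion.mpr ⟨i, hv⟩)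

lemma X_subset (h : P.IsPartitionOf A) : P.X ⊆ A := fun _ hv => h.2.2 ▸ Or.inl hv

lemma mem_X_or_mem_C (h : P.IsPartitionOf A) {v : V} (hv : v ∈ A) :
    v ∈ P.X ∨ ∃ i, v ∈ P.C i := by
  rw [← h.2.2] at hv
  exact hv.imp_right Set.mem_iUnion.mp

lemma not_mem_X_of_mem_C (h : P.IsPartitionOf A) {v : V} {i : Fin 3} (hv : v ∈ P.C i) :
    v ∉ P.X := fun hX => Set.disjoint_left.mp (h.2.1 i) hv hX

lemma eq_of_mem_C (h : P.IsPartitionOf A) {v : V} {i j : Fin 3} (hi : v ∈ P.C i)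
    (hj : v ∈ P.C j) : i = j := by
  by_contra hne
  exact Set.disjoint_left.mp (h.1 i j hne) hi hj

lemma Legal.mono (hQ : Q.Legal G) (hsub : ∀ i, P.C i ⊆ Q.C i) : P.Legal G :=
  fun i j hij u hu v hv => hQ i j hij u (hsub i hu) v (hsub j hv)

lemma compatible_self (P : Part4 V) (A B : Set V) : P.Compatible P A B :=
  fun _ _ => ⟨fun _ => Iff.rfl, Iff.rfl⟩

lemma restrict_isPartitionOf (h : P.IsPartitionOf A) : (P.restrict B).IsPartitionOf (A ∩ B) := by
  refine ⟨fun i j hij => (h.1 i j hij).mono Set.inter_subset_left Set.inter_subset_left,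
    fun i => (h.2.1 i).mono Set.inter_subset_left Set.inter_subset_left, ?_⟩
  simp only [restrict, ← Set.iUnion_inter, ← Set.union_inter_distrib_right, h.2.2]

lemma restrict_legal (h : P.Legal G) : (P.restrict B).Legal G :=
  h.mono fun _ => Set.inter_subset_left

lemma compatible_restrict (P : Part4 V) (A B : Set V) : P.Compatible (P.restrict B) A B :=
  fun _ hv => ⟨fun _ => ⟨fun h => ⟨h, hv.2⟩, And.left⟩, ⟨fun h => ⟨h, hv.2⟩, And.left⟩⟩

def fillX (P : Part4 V) (B : Set V) : Part4 V :=
  ⟨fun i => P.C i ∩ B, B \ ⋃ i, P.C i⟩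

lemma fillX_isPartitionOf (h : P.IsPartitionOf A) : (P.fillX B).IsPartitionOf B := by
  refine ⟨fun i j hij => (h.1 i j hij).mono Set.inter_subset_left Set.inter_subset_left,
    fun i => Set.disjoint_left.mpr fun v hv hX => hX.2 (Set.mem_iUnion.mpr ⟨i, hv.1⟩), ?_⟩
  simp only [fillX, ← Set.iUnion_inter]
  rw [Set.inter_comm]
  exact Set.sdiff_union_inter B _

lemma fillX_legal (h : P.Legal G) : (P.fillX B).Legal G :=
  h.mono fun _ => Set.inter_subset_left

lemma fillX_compatible (h : P.IsPartitionOf A) : (P.fillX B).Compatible P B A := by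
  intro v ⟨hvB, hvA⟩
  refine ⟨fun i => ⟨And.left, fun hv => ⟨hv, hvB⟩⟩, ⟨fun hX => ?_, fun hX => ⟨hvB, ?_⟩⟩⟩
  · rcases mem_X_or_mem_C h hvA with hX' | ⟨i, hi⟩
    · exact hX'
    · exact absurd (Set.mem_iUnion.mpr ⟨i, hi⟩) hX.2
  · rintro hC
    obtain ⟨i, hi⟩ := Set.mem_iUnion.mp hC
    exact not_mem_X_of_mem_C h hi hX

def relabel (P : Part4 V) (g : Fin 3 → Fin 3) : Part4 V :=
  ⟨fun i => {v | ∃ j, g j = i ∧ v ∈ P.C j}, P.X⟩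

lemma relabel_isPartitionOf (h : P.IsPartitionOf A) (g : Fin 3 → Fin 3) :
    (P.relabel g).IsPartitionOf A := by
  refine ⟨fun i i' hii' => Set.disjoint_left.mpr ?_,
    fun i => Set.disjoint_left.mpr fun v ⟨j, _, hj⟩ => not_mem_X_of_mem_C h hj, ?_⟩
  · rintro v ⟨j, rfl, hj⟩ ⟨j', rfl, hj'⟩
    exact hii' (congrArg g (eq_of_mem_C h hj hj'))
  · rw [← h.2.2]
    congr 1
    ext v
    simp only [relabel, Set.mem_iUnion, Set.mem_ofPred_eq]
    exact ⟨fun ⟨_, j, _, hj⟩ => ⟨j, hj⟩, fun ⟨j, hj⟩ => ⟨g j, j, rfl, hj⟩⟩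

lemma relabel_legal (h : P.Legal G) (g : Fin 3 → Fin 3) : (P.relabel g).Legal G := by
  rintro _ _ hii' u ⟨j, rfl, hu⟩ v ⟨j', rfl, hv⟩
  exact h j j' (fun he => hii' (congrArg g he)) u hu v hv

lemma Compatible.relabel (h : P.Compatible Q A B) (g : Fin 3 → Fin 3) :
    (P.relabel g).Compatible (Q.relabel g) A B := by
  intro v hv
  obtain ⟨hC, hX⟩ := h v hv
  exact ⟨fun i => exists_congr fun j => and_congr_right fun _ => hC j, hX⟩

def ofBins {κ : Type} (X : Set V) (S : κ → Set V) (f : κ → Fin 3) : Part4 V :=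
  ⟨fun b => {v | ∃ o, f o = b ∧ v ∈ S o}, X⟩

variable {κ : Type} {X : Set V} {S : κ → Set V}

lemma ofBins_isPartitionOf_univ (hS : ∀ o o', o ≠ o' → Disjoint (S o) (S o'))
    (hX : ∀ o, Disjoint (S o) X) (hcover : ∀ v ∉ X, ∃ o, v ∈ S o) (f : κ → Fin 3) :
    (ofBins X S f).IsPartitionOf Set.univ := by
  refine ⟨fun b b' hbb' => Set.disjoint_left.mpr ?_, fun b => Set.disjoint_left.mpr ?_,
    Set.eq_univ_of_forall fun v => ?_⟩
  · rintro v ⟨o, rfl, hv⟩ ⟨o', rfl, hv'⟩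
    have hoo' : o ≠ o' := fun he => hbb' (he ▸ rfl)
    exact Set.disjoint_left.mp (hS o o' hoo') hv hv'
  · rintro v ⟨o, -, hv⟩
    exact Set.disjoint_left.mp (hX o) hv
  · by_cases hv : v ∈ X
    · exact Or.inl hv
    · obtain ⟨o, ho⟩ := hcover v hv
      exact Or.inr (Set.mem_iUnion.mpr ⟨f o, o, rfl, ho⟩)

lemma ofBins_legal (hS : ∀ o o', o ≠ o' → ∀ u ∈ S o, ∀ v ∈ S o', ¬ G.Adj u v)
    (f : κ → Fin 3) : (ofBins X S f).Legal G := by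
  rintro _ _ hbb' u ⟨o, rfl, hu⟩ v ⟨o', rfl, hv⟩
  exact hS o o' (fun he => hbb' (he ▸ rfl)) u hu v hv

lemma ncard_ofBins_C_inter_le [Fintype κ] (f : κ → Fin 3) (b : Fin 3)
    (W : Set V) : ((ofBins X S f).C b ∩ W).ncard ≤ ∑ o with f o = b, (S o ∩ W).ncard := by
  have : (ofBins X S f).C b ∩ W = ⋃ o ∈ (Finset.univ.filter fun o => f o = b), S o ∩ W := by
    ext v
    simp only [ofBins, Set.mem_inter_iff, Set.mem_ofPred_eq, Set.mem_iUnion, Finset.mem_filter,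
      Finset.mem_univ, true_and, exists_prop]
    exact ⟨fun ⟨⟨o, ho, hv⟩, hw⟩ => ⟨o, ho, hv, hw⟩, fun ⟨o, ho, hv, hw⟩ => ⟨⟨o, ho, hv⟩, hw⟩⟩
  rw [this]
  exact Finset.set_ncard_biUnion_le _ _

lemma ncard_X_le {B : Finset V} (h : P.IsPartitionOf B) : P.X.ncard ≤ B.card :=
  (Set.ncard_le_ncard (X_subset h) B.finite_toSet).trans_eq (Set.ncard_coe_finset B)

lemma exists_C_inter_nonempty {B : Finset V} (h : P.IsPartitionOf Set.univ) (hX : P.X.Finite)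
    (hcard : P.X.ncard < B.card) : ∃ i, (P.C i ∩ B).Nonempty := by
  obtain ⟨v, hvB, hvX⟩ : ∃ v ∈ B, v ∉ P.X := by
    by_contra! hBX
    have := Set.ncard_le_ncard (s := (B : Set V)) hBX hX
    rw [Set.ncard_coe_finset] at this
    omega
  obtain hv | ⟨i, hi⟩ := mem_X_or_mem_C h (Set.mem_univ v)
  · exact absurd hv hvX
  · exact ⟨i, v, hi, hvB⟩

/-- Conditions (a) and (b) of a split for the label `a` of a node with bag partition `P`, where
`a'` is the label of its parent. -/
structure IsLabel (P : Part4 V) (a a' : Finset (Fin 3)) : Prop where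
  nonempty : a.Nonempty
  mem_iff : (∃ i, (P.C i).Nonempty) → ∀ i, i ∈ a ↔ (P.C i).Nonempty
  eq_singleton : ¬ (∃ i, (P.C i).Nonempty) → ∃ i ∈ a', a = {i}
  subset : a ⊆ a'

lemma IsLabel.mem {a a' : Finset (Fin 3)} (h : P.IsLabel a a') {i : Fin 3}
    (hi : (P.C i).Nonempty) : i ∈ a :=
  (h.mem_iff ⟨i, hi⟩ i).mpr hi

lemma exists_isLabel {a' : Finset (Fin 3)} (hne : a'.Nonempty)
    (hsub : ∀ i, (P.C i).Nonempty → i ∈ a') : ∃ a, P.IsLabel a a' := by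
  classical
  by_cases h : ∃ i, (P.C i).Nonempty
  · obtain ⟨i, hi⟩ := h
    refine ⟨Finset.univ.filter fun i => (P.C i).Nonempty, ⟨i, by simpa using hi⟩,
      fun _ _ => by simp, fun h' => absurd ⟨i, hi⟩ h', fun j hj => hsub j ?_⟩
    simpa using hj
  · obtain ⟨i, hi⟩ := hne
    exact ⟨{i}, Finset.singleton_nonempty i, fun h' => absurd h' h, fun _ => ⟨i, hi, rfl⟩,
      Finset.singleton_subset_iff.mpr hi⟩

lemma exists_isLabel_self (h : ∃ i, (P.C i).Nonempty) : ∃ a, P.IsLabel a a := by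
  classical
  obtain ⟨i, hi⟩ := h
  exact ⟨Finset.univ.filter fun i => (P.C i).Nonempty, ⟨i, by simpa using hi⟩,
    fun _ _ => by simp, fun h' => absurd ⟨i, hi⟩ h', subset_rfl⟩

end Part4

lemma exists_minimal_then_maximal {α : Type*} {s : Set α} (hs : s.Nonempty) (f g : α → ℕ)
    {N : ℕ} (hg : ∀ a ∈ s, g a ≤ N) :
    ∃ a ∈ s, (∀ b ∈ s, f a ≤ f b) ∧ ∀ b ∈ s, f b = f a → g b ≤ g a := by
  let key : α → ℕ ×ₗ ℕ := fun a => toLex (f a, N - g a)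
  obtain ⟨a, ha, hkey⟩ : ∃ a ∈ s, ∀ b ∈ s, key a ≤ key b :=
    ⟨_, Function.argminOn_mem key s hs, fun b hb => Function.argminOn_le key s hb⟩
  refine ⟨a, ha, fun b hb => ?_, fun b hb hfb => ?_⟩ <;>
  have hle := Prod.Lex.le_iff.mp (hkey b hb) <;>
  simp only [key, ofLex_toLex] at hle
  · omega
  · have := hg a ha
    have := hg b hb
    omega

lemma exists_pack_of_card_le_three {α : Type*} (S : ℕ) (s : Finset α) (w : α → ℕ)
    (hw : ∀ a ∈ s, 2 * w a ≤ S) (hcard : s.card ≤ 3) :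
    ∃ f : α → Fin 3, ∀ b, 2 * ∑ a ∈ s with f a = b, w a ≤ S := by
  classical
  let f : α → Fin 3 := fun a => if h : a ∈ s then Fin.castLE hcard (s.equivFin ⟨a, h⟩) else 0
  refine ⟨f, fun b => ?_⟩
  have hone : (s.filter fun a => f a = b).card ≤ 1 := by
    refine Finset.card_le_one.mpr fun a ha a' ha' => ?_
    obtain ⟨has, hfa⟩ := Finset.mem_filter.mp ha
    obtain ⟨has', hfa'⟩ := Finset.mem_filter.mp ha'
    simp only [f, dif_pos has, dif_pos has'] at hfa hfa'
    have := s.equivFin.injective (Fin.castLE_injective hcard (hfa.trans hfa'.symm))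
    exact congrArg Subtype.val this
  calc 2 * ∑ a ∈ s with f a = b, w a = ∑ a ∈ s with f a = b, 2 * w a := Finset.mul_sum _ _ _
    _ ≤ (s.filter fun a => f a = b).card • S :=
        Finset.sum_le_card_nsmul _ _ _ fun a ha => hw a (Finset.mem_filter.mp ha).1
    _ ≤ S := by rw [smul_eq_mul]; exact (Nat.mul_le_mul_right S hone).trans (one_mul S).le

/-- With at least four items, an item of minimal weight weighs at most `S / 4` and fits into the
lightest bin of a packing of the other items. -/
theorem exists_pack_three_bins {α : Type*} (S : ℕ) (s : Finset α) (w : α → ℕ)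
    (hw : ∀ a ∈ s, 2 * w a ≤ S) (hsum : ∑ a ∈ s, w a ≤ S) :
    ∃ f : α → Fin 3, ∀ b, 2 * ∑ a ∈ s with f a = b, w a ≤ S := by
  classical
  induction s using Finset.strongInduction with
  | H s ih =>
  by_cases hcard : s.card ≤ 3
  · exact exists_pack_of_card_le_three S s w hw hcard
  · obtain ⟨x, hxs, hxmin⟩ := Finset.exists_min_image s w (Finset.card_pos.mp (by omega))
    have hx : 4 * w x ≤ ∑ a ∈ s, w a := by
      have := Finset.card_nsmul_le_sum s w (w x) hxmin
      rw [smul_eq_mul] at this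
      nlinarith
    have herase := Finset.add_sum_erase s w hxs
    obtain ⟨f, hf⟩ := ih (s.erase x) (Finset.erase_ssubset hxs)
      (fun a ha => hw a (Finset.mem_of_mem_erase ha)) (by omega)
    let load : Fin 3 → ℕ := fun b => ∑ a ∈ s.erase x with f a = b, w a
    obtain ⟨b₀, -, hb₀⟩ := Finset.exists_min_image Finset.univ load Finset.univ_nonempty
    have hb₀3 : 3 * load b₀ ≤ ∑ a ∈ s.erase x, w a := by
      have htot : ∑ b, load b = ∑ a ∈ s.erase x, w a := Finset.sum_fiberwise _ f w
      rw [Fin.sum_univ_three] at htot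
      have := hb₀ 0 (Finset.mem_univ _)
      have := hb₀ 1 (Finset.mem_univ _)
      have := hb₀ 2 (Finset.mem_univ _)
      omega
    refine ⟨Function.update f x b₀, fun b => ?_⟩
    have hload : ∑ a ∈ s with Function.update f x b₀ a = b, w a =
        (if b₀ = b then w x else 0) + load b := by
      simp only [load, Finset.sum_filter]
      rw [← Finset.add_sum_erase s _ hxs, Function.update_self]
      refine congrArg _ (Finset.sum_congr rfl fun a ha => ?_)
      rw [Function.update_of_ne (Finset.ne_of_mem_erase ha)]
    rw [hload]
    by_cases hb : b₀ = b
    · subst hb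
      rw [if_pos rfl]
      omega
    · rw [if_neg hb, zero_add]
      exact hf b

namespace RootedTD

variable {V ι : Type} {G : SimpleGraph V} (D : RootedTD V G ι)

lemma exists_walk_iterate_parent (y : ι) (n : ℕ) (h : ∀ a < n, D.parent^[a] y ≠ D.root) :
    ∃ w : D.T.Walk y (D.parent^[n] y),
      w.support = (List.range (n + 1)).map (D.parent^[·] y) := by
  induction n with
  | zero => exact ⟨Walk.nil, rfl⟩
  | succ n ih =>
    obtain ⟨w, hw⟩ := ih fun a ha => h a (by omega)
    have hadj : D.T.Adj (D.parent^[n] y) (D.parent^[n + 1] y) := by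
      rw [Function.iterate_succ_apply']
      exact D.parent_adj _ (h n n.lt_succ_self)
    refine ⟨w.concat hadj, ?_⟩
    rw [Walk.support_concat, hw, List.range_succ (n := n + 1), List.map_append,
      List.map_singleton]

/-- A repetition among the ancestors of `x` would give a meeting point with smaller `i + j`. -/
lemma iterate_parent_injOn_of_minimal {x y : ι} {i j : ℕ}
    (hmeet : D.parent^[i] x = D.parent^[j] y)
    (hmin : ∀ a b, D.parent^[a] x = D.parent^[b] y → i + j ≤ a + b) :
    ∀ a ≤ i, ∀ a' ≤ i, D.parent^[a] x = D.parent^[a'] x → a = a' := by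
  have key : ∀ a a', a < a' → a' ≤ i → D.parent^[a] x ≠ D.parent^[a'] x := by
    intro a a' hlt ha' he
    have : D.parent^[(i - a') + a] x = D.parent^[j] y := by
      rw [Function.iterate_add_apply, he, ← Function.iterate_add_apply, Nat.sub_add_cancel ha',
        hmeet]
    have := hmin _ _ this
    omega
  intro a ha a' ha' he
  rcases lt_trichotomy a a' with hlt | heq | hgt
  · exact absurd he (key a a' hlt ha')
  · exact heq
  · exact absurd he.symm (key a' a hgt ha)

lemma ne_root_of_injOn {y : ι} {n : ℕ}
    (hinj : ∀ a ≤ n, ∀ a' ≤ n, D.parent^[a] y = D.parent^[a'] y → a = a') :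
    ∀ a < n, D.parent^[a] y ≠ D.root := by
  intro a ha hroot
  have : D.parent^[a + 1] y = D.parent^[a] y := by
    rw [Function.iterate_succ_apply', hroot, D.parent_root]
  exact absurd (hinj _ ha _ ha.le this) (by omega)

lemma exists_path_through_meet {x y : ι} {i j : ℕ} (hmeet : D.parent^[i] x = D.parent^[j] y)
    (hmin : ∀ a b, D.parent^[a] x = D.parent^[b] y → i + j ≤ a + b) :
    ∃ w : D.T.Walk x y, w.IsPath ∧ (∀ a ≤ i, D.parent^[a] x ∈ w.support) ∧
      ∀ b ≤ j, D.parent^[b] y ∈ w.support := by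
  have hinjx := D.iterate_parent_injOn_of_minimal hmeet hmin
  have hinjy := D.iterate_parent_injOn_of_minimal hmeet.symm fun b a h => by
    have := hmin a b h.symm; omega
  have hcross : ∀ a ≤ i, ∀ b < j, D.parent^[a] x ≠ D.parent^[b] y := fun a ha b hb h => by
    have := hmin a b h; omega
  obtain ⟨wx, hwx⟩ := D.exists_walk_iterate_parent x i (D.ne_root_of_injOn hinjx)
  obtain ⟨wy, hwy⟩ := D.exists_walk_iterate_parent y j (D.ne_root_of_injOn hinjy)
  let w : D.T.Walk x y := wx.append (wy.reverse.copy hmeet.symm rfl)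
  have hsupp : w.support = (List.range (i + 1)).map (D.parent^[·] x) ++
      ((List.range j).map (D.parent^[·] y)).reverse := by
    simp only [w, Walk.support_append, Walk.support_copy, Walk.support_reverse, hwx, hwy,
      List.range_succ (n := j), List.map_append, List.reverse_append]
    simp
  have hmemx : ∀ a ≤ i, D.parent^[a] x ∈ w.support := fun a ha => by
    rw [hsupp]
    exact List.mem_append_left _ (List.mem_map.mpr ⟨a, List.mem_range.mpr (by omega), rfl⟩)
  refine ⟨w, ?_, hmemx, fun b hb => ?_⟩
  · rw [Walk.isPath_def, hsupp, List.nodup_append, List.nodup_reverse]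
    refine ⟨List.Nodup.map_on (fun a ha a' ha' => hinjx a ?_ a' ?_) List.nodup_range,
      List.Nodup.map_on (fun b hb b' hb' => hinjy b ?_ b' ?_) List.nodup_range, ?_⟩
    · exact Nat.lt_succ_iff.mp (List.mem_range.mp ha)
    · exact Nat.lt_succ_iff.mp (List.mem_range.mp ha')
    · exact (List.mem_range.mp hb).le
    · exact (List.mem_range.mp hb').le
    · simp only [List.mem_map, List.mem_reverse, List.mem_range]
      rintro _ ⟨a, ha, rfl⟩ _ ⟨b, hb, rfl⟩
      exact hcross a (by omega) b hb
  · rcases hb.lt_or_eq with hb | rfl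
    · rw [hsupp, List.mem_append, List.mem_reverse]
      exact Or.inr (List.mem_map.mpr ⟨b, List.mem_range.mpr hb, rfl⟩)
    · exact hmeet ▸ hmemx i le_rfl

theorem exists_common_ancestor_mem_bag {v : V} {x y : ι} (hx : v ∈ D.bag x)
    (hy : v ∈ D.bag y) :
    ∃ i j, D.parent^[i] x = D.parent^[j] y ∧
      (∀ a ≤ i, v ∈ D.bag (D.parent^[a] x)) ∧ ∀ b ≤ j, v ∈ D.bag (D.parent^[b] y) := by
  classical
  have hex : ∃ n, ∃ i j, i + j = n ∧ D.parent^[i] x = D.parent^[j] y := by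
    obtain ⟨r, hr⟩ := D.parent_reach x
    obtain ⟨s, hs⟩ := D.parent_reach y
    exact ⟨_, r, s, rfl, hr.trans hs.symm⟩
  obtain ⟨i, j, hij, hmeet⟩ := Nat.find_spec hex
  have hmin : ∀ a b, D.parent^[a] x = D.parent^[b] y → i + j ≤ a + b := fun a b h =>
    hij ▸ Nat.find_min' hex ⟨a, b, rfl, h⟩
  obtain ⟨w, hpath, hwx, hwy⟩ := D.exists_path_through_meet hmeet hmin
  have hall := D.conn v x y w hpath hx hy
  exact ⟨i, j, hmeet, fun a ha => hall _ (hwx a ha), fun b hb => hall _ (hwy b hb)⟩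

theorem iff_of_mem_bag (R : ι → Prop) {v : V}
    (hR : ∀ y, v ∈ D.bag y → v ∈ D.bag (D.parent y) → (R y ↔ R (D.parent y)))
    {x y : ι} (hx : v ∈ D.bag x) (hy : v ∈ D.bag y) : R x ↔ R y := by
  have hup : ∀ z n, (∀ a ≤ n, v ∈ D.bag (D.parent^[a] z)) → (R z ↔ R (D.parent^[n] z)) := by
    intro z n
    induction n with
    | zero => simp
    | succ n ih =>
      intro hbags
      rw [ih fun a ha => hbags a (by omega), Function.iterate_succ_apply']
      refine hR _ (hbags n (by omega)) ?_
      rw [← Function.iterate_succ_apply' D.parent n z]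
      exact hbags _ le_rfl
  obtain ⟨i, j, hmeet, hxi, hyj⟩ := D.exists_common_ancestor_mem_bag hx hy
  rw [hup x i hxi, hup y j hyj, hmeet]

noncomputable def depth (y : ι) : ℕ := sInf {n | D.parent^[n] y = D.root}

lemma iterate_depth (y : ι) : D.parent^[D.depth y] y = D.root :=
  Nat.sInf_mem (D.parent_reach y)

lemma depth_le {y : ι} {n : ℕ} (h : D.parent^[n] y = D.root) : D.depth y ≤ n :=
  Nat.sInf_le h

lemma depth_parent {y : ι} (hy : y ≠ D.root) : D.depth (D.parent y) + 1 = D.depth y := by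
  have hpos : 1 ≤ D.depth y := Nat.one_le_iff_ne_zero.mpr fun h => hy (by
    simpa [h] using D.iterate_depth y)
  have h₁ : D.depth y ≤ D.depth (D.parent y) + 1 :=
    D.depth_le (by rw [Function.iterate_succ_apply]; exact D.iterate_depth _)
  have h₂ : D.depth (D.parent y) ≤ D.depth y - 1 :=
    D.depth_le (by
      rw [← Function.iterate_succ_apply, Nat.succ_eq_add_one, Nat.sub_add_cancel hpos]
      exact D.iterate_depth y)
  omega

lemma depth_eq_add_of_iterate_ne_root {y : ι} {n : ℕ} (h : D.parent^[n] y ≠ D.root) :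
    D.depth y = D.depth (D.parent^[n] y) + n := by
  induction n with
  | zero => rfl
  | succ n ih =>
    rw [Function.iterate_succ_apply'] at h ⊢
    have hn : D.parent^[n] y ≠ D.root := fun he => h (by rw [he, D.parent_root])
    have := D.depth_parent hn
    rw [ih hn]
    omega

lemma ne_root_of_parent_eq {c t : ι} (hct : D.parent c = t) (hct' : c ≠ t) : c ≠ D.root :=
  fun h => hct' (by rw [← hct, h, D.parent_root])

lemma eq_of_iterate_parent_eq_sibling {z c c' : ι} {n m : ℕ} (hn : D.parent^[n] z = c)
    (hm : D.parent^[m] z = c') {t : ι} (hct : D.parent c = t) (hct' : c ≠ t)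
    (hc't : D.parent c' = t) (hc't' : c' ≠ t) : c = c' := by
  have hcr := D.ne_root_of_parent_eq hct hct'
  have hcr' := D.ne_root_of_parent_eq hc't hc't'
  have h₁ := D.depth_eq_add_of_iterate_ne_root (hn ▸ hcr)
  have h₂ := D.depth_eq_add_of_iterate_ne_root (hm ▸ hcr')
  have h₃ := D.depth_parent hcr
  have h₄ := D.depth_parent hcr'
  rw [hn] at h₁
  rw [hm] at h₂
  rw [hct] at h₃
  rw [hc't] at h₄
  obtain rfl : n = m := by omega
  exact hn.symm.trans hm

lemma bag_subset_Vsub (y : ι) : (D.bag y : Set V) ⊆ D.Vsub y :=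
  fun _ hv => ⟨y, ⟨0, rfl⟩, hv⟩

lemma Vsub_root : D.Vsub D.root = Set.univ :=
  Set.eq_univ_of_forall fun v =>
    let ⟨x, hx⟩ := D.vert_cover v
    ⟨x, D.parent_reach x, hx⟩

lemma mem_bag_parent_of_mem_Vsub {v : V} {s z : ι} (hv : v ∈ D.Vsub s) (hz : v ∈ D.bag z)
    (hzs : ¬ ∃ n, D.parent^[n] z = s) : v ∈ D.bag (D.parent s) := by
  obtain ⟨z₀, ⟨n, rfl⟩, hv₀⟩ := hv
  obtain ⟨i, j, hmeet, hup, -⟩ := D.exists_common_ancestor_mem_bag hv₀ hz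
  have hni : n < i := by
    by_contra! hin
    refine hzs ⟨(n - i) + j, ?_⟩
    rw [Function.iterate_add_apply, ← hmeet, ← Function.iterate_add_apply, Nat.sub_add_cancel hin]
  simpa only [Function.iterate_succ_apply'] using hup (n + 1) hni

lemma mem_bag_or_mem_Vsub_child {t : ι} {v : V} (hv : v ∈ D.Vsub t) :
    v ∈ D.bag t ∨ ∃ c, D.parent c = t ∧ c ≠ t ∧ v ∈ D.Vsub c := by
  classical
  obtain ⟨z, hzt, hvz⟩ := hv
  have hspec := Nat.find_spec hzt
  rcases Nat.eq_zero_or_pos (Nat.find hzt) with h0 | hpos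
  · rw [h0] at hspec
    exact Or.inl (hspec ▸ hvz)
  · refine Or.inr ⟨D.parent^[Nat.find hzt - 1] z, ?_, fun he => ?_, z, ⟨_, rfl⟩, hvz⟩
    · rwa [← Function.iterate_succ_apply' D.parent, Nat.succ_eq_add_one, Nat.sub_add_cancel hpos]
    · exact Nat.find_min hzt (Nat.sub_lt hpos one_pos) he

/-- The pieces into which the bag of `t` cuts `V`: `none` indexes the part outside the subtree
at `t`, and `some c` the part in the subtree at a child `c` of `t`. -/
def branch (t : ι) : Option ι → Set V
  | none => (D.Vsub t)ᶜ
  | some c => {v | D.parent c = t ∧ c ≠ t ∧ v ∈ D.Vsub c ∧ v ∉ D.bag t}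

lemma not_mem_bag_of_mem_branch {t : ι} {v : V} : ∀ {o}, v ∈ D.branch t o → v ∉ D.bag t
  | none, hv, hvt => hv (D.bag_subset_Vsub t hvt)
  | some _, hv, hvt => hv.2.2.2 hvt

lemma exists_mem_branch {t : ι} {v : V} (hv : v ∉ D.bag t) : ∃ o, v ∈ D.branch t o := by
  by_cases hvt : v ∈ D.Vsub t
  · obtain hbag | ⟨c, hct, hct', hvc⟩ := D.mem_bag_or_mem_Vsub_child hvt
    · exact absurd hbag hv
    · exact ⟨some c, hct, hct', hvc, hv⟩
  · exact ⟨none, hvt⟩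

/-- A bag containing vertices of two branches at `t` would have to lie both inside and outside
the corresponding subtrees. -/
lemma branch_eq_of_mem_bag {t z : ι} {u v : V} {o o' : Option ι} (hu : u ∈ D.branch t o)
    (hv : v ∈ D.branch t o') (huz : u ∈ D.bag z) (hvz : v ∈ D.bag z) : o = o' := by
  have hnone : ∀ {w}, w ∈ D.branch t none → w ∈ D.bag z → ¬ ∃ n, D.parent^[n] z = t :=
    fun hw hwz hzt => hw ⟨z, hzt, hwz⟩
  have hsome : ∀ {w c}, w ∈ D.branch t (some c) → w ∈ D.bag z → ∃ n, D.parent^[n] z = c :=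
    fun ⟨hct, _, hwc, hwt⟩ hwz => by_contra fun hzc =>
      hwt (hct ▸ D.mem_bag_parent_of_mem_Vsub hwc hwz hzc)
  have hup : ∀ {c}, D.parent c = t → (∃ n, D.parent^[n] z = c) → ∃ n, D.parent^[n] z = t :=
    fun hct ⟨n, hn⟩ => ⟨n + 1, by rw [Function.iterate_succ_apply', hn, hct]⟩
  rcases o with _ | c <;> rcases o' with _ | c'
  · rfl
  · exact absurd (hup hv.1 (hsome hv hvz)) (hnone hu huz)
  · exact absurd (hup hu.1 (hsome hu huz)) (hnone hv hvz)
  · obtain ⟨n, hn⟩ := hsome hu huz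
    obtain ⟨m, hm⟩ := hsome hv hvz
    rw [D.eq_of_iterate_parent_eq_sibling hn hm hu.1 hu.2.1 hv.1 hv.2.1]

lemma disjoint_branch {t : ι} {o o' : Option ι} (h : o ≠ o') :
    Disjoint (D.branch t o) (D.branch t o') := by
  refine Set.disjoint_left.mpr fun v hv hv' => ?_
  obtain ⟨z, hz⟩ := D.vert_cover v
  exact h (D.branch_eq_of_mem_bag hv hv' hz hz)

lemma exists_heavy_node_with_light_children [Finite ι] (W : Finset V) (hW : W.Nonempty) :
    ∃ t, W.card < 2 * ((W : Set V) ∩ D.Vsub t).ncard ∧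
      ∀ c, D.parent c = t → c ≠ t → 2 * ((W : Set V) ∩ D.Vsub c).ncard ≤ W.card := by
  let heavy : Set ι := {t | W.card < 2 * ((W : Set V) ∩ D.Vsub t).ncard}
  have hroot : D.root ∈ heavy := by
    simp only [heavy, Set.mem_ofPred_eq, D.Vsub_root, Set.inter_univ, Set.ncard_coe_finset]
    have := hW.card_pos
    omega
  obtain ⟨t, ht, htmax⟩ := Set.exists_max_image heavy D.depth (Set.toFinite _) ⟨_, hroot⟩
  refine ⟨t, ht, fun c hct hct' => not_lt.mp fun hc => ?_⟩
  have h₁ := D.depth_parent (D.ne_root_of_parent_eq hct hct')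
  have h₂ := htmax c hc
  rw [hct] at h₁
  omega

lemma two_mul_ncard_branch_inter_le {W : Finset V} {t : ι}
    (ht : W.card < 2 * ((W : Set V) ∩ D.Vsub t).ncard)
    (hchildren : ∀ c, D.parent c = t → c ≠ t → 2 * ((W : Set V) ∩ D.Vsub c).ncard ≤ W.card) :
    ∀ o, 2 * (D.branch t o ∩ W).ncard ≤ W.card
  | none => by
    have := Set.ncard_inter_add_ncard_sdiff_eq_ncard (W : Set V) (D.Vsub t) W.finite_toSet
    rw [Set.ncard_coe_finset, Set.sdiff_eq] at this
    simp only [branch]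
    rw [Set.inter_comm]
    omega
  | some c => by
    by_cases hc : D.parent c = t ∧ c ≠ t
    · refine le_trans ?_ (hchildren c hc.1 hc.2)
      rw [Set.inter_comm]
      exact Nat.mul_le_mul_left 2 (Set.ncard_le_ncard (Set.inter_subset_inter_right _
        fun v hv => hv.2.2.1) (W.finite_toSet.inter_of_left _))
    · have : D.branch t (some c) = ∅ := Set.eq_empty_of_forall_notMem fun v hv =>
        hc ⟨hv.1, hv.2.1⟩
      simp [this]

/-- Separating at the deepest node whose subtree holds more than half of `W` leaves pieces with
at most half of `W` each, which are then packed into three classes. -/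
theorem exists_balanced_separator [Finite ι] (W : Finset V) (hW : W.Nonempty) :
    ∃ P : Part4 V, P.IsPartitionOf Set.univ ∧ P.Legal G ∧ (∃ t, P.X = D.bag t) ∧
      ∀ b, 2 * (P.C b ∩ W).ncard ≤ W.card := by
  classical
  have := Fintype.ofFinite ι
  obtain ⟨t, ht, hchildren⟩ := D.exists_heavy_node_with_light_children W hW
  have hlight := D.two_mul_ncard_branch_inter_le ht hchildren
  have htotal : ∑ o, (D.branch t o ∩ W).ncard ≤ W.card := by
    have hdisj : Pairwise (Function.onFun Disjoint fun o => D.branch t o ∩ (W : Set V)) :=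
      fun o o' hoo' => (D.disjoint_branch hoo').mono Set.inter_subset_left Set.inter_subset_left
    rw [← finsum_eq_sum_of_fintype, ← Set.ncard_iUnion_of_finite
      (fun o => W.finite_toSet.inter_of_right _) hdisj, ← Set.ncard_coe_finset W]
    exact Set.ncard_le_ncard (Set.iUnion_subset fun o => Set.inter_subset_right) W.finite_toSet
  obtain ⟨f, hf⟩ := exists_pack_three_bins W.card Finset.univ _ (fun o _ => hlight o) htotal
  refine ⟨Part4.ofBins (D.bag t) (D.branch t) f, ?_, ?_, ⟨t, rfl⟩, fun b => ?_⟩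
  · exact Part4.ofBins_isPartitionOf_univ (fun _ _ => D.disjoint_branch)
      (fun _ => Set.disjoint_left.mpr fun _ => D.not_mem_bag_of_mem_branch)
      (fun _ => D.exists_mem_branch) f
  · refine Part4.ofBins_legal (fun o o' hoo' u hu v hv hadj => ?_) f
    obtain ⟨z, huz, hvz⟩ := D.edge_cover hadj
    exact hoo' (D.branch_eq_of_mem_bag hu hv huz hvz)
  · exact (Nat.mul_le_mul_left 2 (Part4.ncard_ofBins_C_inter_le f b _)).trans (hf b)

end RootedTD

section GoodPartitions

variable {V ι : Type} {G : SimpleGraph V} {D : RootedTD V G ι}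

variable (G D) in
def IsLegalExtension (y : ι) (P Q : Part4 V) : Prop :=
  Q.IsPartitionOf (D.Vsub y) ∧ Q.Legal G ∧ Q.Compatible P (D.Vsub y) (D.bag y : Set V)

lemma psize_le_ncard {y : ι} {P Q : Part4 V} (h : IsLegalExtension G D y P Q) :
    psize G D y P ≤ Q.X.ncard :=
  Nat.sInf_le ⟨Q, h.1, h.2.1, h.2.2, rfl⟩

lemma exists_isLegalExtension_ncard_eq_psize {y : ι} {P : Part4 V}
    (hP : P.IsPartitionOf (D.bag y : Set V)) (hL : P.Legal G) :
    ∃ Q, IsLegalExtension G D y P Q ∧ Q.X.ncard = psize G D y P := by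
  obtain ⟨Q, h₁, h₂, h₃, h₄⟩ := Nat.sInf_mem (⟨_, P.fillX (D.Vsub y),
    Part4.fillX_isPartitionOf hP, Part4.fillX_legal hL, Part4.fillX_compatible hP, rfl⟩ :
    {n | ∃ Q : Part4 V, Q.IsPartitionOf (D.Vsub y) ∧ Q.Legal G ∧
      Q.Compatible P (D.Vsub y) (D.bag y : Set V) ∧ Q.X.ncard = n}.Nonempty)
  exact ⟨Q, ⟨h₁, h₂, h₃⟩, h₄⟩

lemma psize_relabel_le {y : ι} {P : Part4 V} (hP : P.IsPartitionOf (D.bag y : Set V))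
    (hL : P.Legal G) (g : Fin 3 → Fin 3) : psize G D y (P.relabel g) ≤ psize G D y P := by
  obtain ⟨Q, ⟨hQ, hQL, hQc⟩, hQX⟩ := exists_isLegalExtension_ncard_eq_psize hP hL
  exact (psize_le_ncard
    ⟨Part4.relabel_isPartitionOf hQ g, Part4.relabel_legal hQL g, hQc.relabel g⟩).trans_eq hQX

theorem exists_goodWrt {y : ι} {Px : Part4 V}
    (hPx : Px.IsPartitionOf (D.bag (D.parent y) : Set V)) (hL : Px.Legal G) :
    ∃ Py, GoodWrt G D y Py Px := by
  let cand : Set (Part4 V) := {Q | Q.IsPartitionOf (D.bag y : Set V) ∧ Q.Legal G ∧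
    Q.Compatible Px (D.bag y : Set V) (D.bag (D.parent y) : Set V)}
  have hne : cand.Nonempty :=
    ⟨Px.fillX _, Part4.fillX_isPartitionOf hPx, Part4.fillX_legal hL, Part4.fillX_compatible hPx⟩
  obtain ⟨Py, ⟨hPy, hPyL, hPyc⟩, hmin, hmax⟩ := exists_minimal_then_maximal hne
    (psize G D y) (fun Q => Q.X.ncard) (fun Q hQ => Part4.ncard_X_le hQ.1)
  exact ⟨Py, hPy, hPyL, hPyc, fun Q h₁ h₂ h₃ => hmin Q ⟨h₁, h₂, h₃⟩,
    fun Q h₁ h₂ h₃ => hmax Q ⟨h₁, h₂, h₃⟩⟩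

/-- Merging classes does not increase `psize` and keeps the separator, so minimality and
maximality survive. -/
lemma GoodWrt.relabel {y : ι} {Py Px : Part4 V} (h : GoodWrt G D y Py Px) (g : Fin 3 → Fin 3)
    (hg : ∀ j, (Py.C j ∩ D.bag (D.parent y)).Nonempty → g j = j) :
    GoodWrt G D y (Py.relabel g) Px := by
  obtain ⟨hPy, hL, hc, hmin, hmax⟩ := h
  have hle := psize_relabel_le hPy hL g
  have hcomp : (Py.relabel g).Compatible Px (D.bag y : Set V) (D.bag (D.parent y) : Set V) := by
    intro v hv
    refine ⟨fun i => ⟨?_, fun hvi => ⟨i, hg i ⟨v, ((hc v hv).1 i).mpr hvi, hv.2⟩,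
      ((hc v hv).1 i).mpr hvi⟩⟩, (hc v hv).2⟩
    rintro ⟨j, rfl, hvj⟩
    rw [hg j ⟨v, hvj, hv.2⟩]
    exact ((hc v hv).1 j).mp hvj
  have hrel := Part4.relabel_isPartitionOf hPy g
  have hrelL := Part4.relabel_legal hL g
  have heq : psize G D y (Py.relabel g) = psize G D y Py :=
    le_antisymm hle (hmin _ hrel hrelL hcomp)
  exact ⟨hrel, hrelL, hcomp, fun Q h₁ h₂ h₃ => heq ▸ hmin Q h₁ h₂ h₃,
    fun Q h₁ h₂ h₃ hQ => hmax Q h₁ h₂ h₃ (hQ.trans heq)⟩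

/-- Classes of a good partition that avoid the parent bag can all be merged into one class of
the parent's label, so that the labels decrease along the tree. -/
theorem exists_goodWrt_isLabel {y : ι} {Px : Part4 V} {aPx a' : Finset (Fin 3)}
    (hPx : Px.IsPartitionOf (D.bag (D.parent y) : Set V)) (hL : Px.Legal G)
    (ha : Px.IsLabel aPx a') :
    ∃ q : Part4 V × Finset (Fin 3), GoodWrt G D y q.1 Px ∧ q.1.IsLabel q.2 aPx := by
  classical
  obtain ⟨Py, hPy⟩ := exists_goodWrt (D := D) hPx hL
  obtain ⟨i₀, hi₀⟩ := ha.nonempty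
  let g : Fin 3 → Fin 3 := fun j => if (Py.C j ∩ D.bag (D.parent y)).Nonempty then j else i₀
  have hsub : ∀ i, ((Py.relabel g).C i).Nonempty → i ∈ aPx := by
    rintro i ⟨v, j, rfl, hvj⟩
    by_cases hj : (Py.C j ∩ D.bag (D.parent y)).Nonempty
    · obtain ⟨u, hu, hup⟩ := id hj
      have huPx := ((hPy.2.2.1 u ⟨Part4.C_subset hPy.1 j hu, hup⟩).1 j).mp hu
      simpa [g, hj] using ha.mem ⟨u, huPx⟩
    · simpa [g, hj] using hi₀
  obtain ⟨a, haP⟩ := Part4.exists_isLabel ⟨i₀, hi₀⟩ hsub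
  exact ⟨(Py.relabel g, a), hPy.relabel g fun j hj => if_pos hj, haP⟩

lemma goodRoot_restrict {k : ℕ} {P : Part4 V} (hP : P.IsPartitionOf Set.univ) (hL : P.Legal G)
    (hX : P.X.ncard ≤ k + 1)
    (hbal : ∀ b, 2 * (P.C b ∩ D.bag D.root).ncard ≤ (D.bag D.root).card)
    (hroot : 2 * (k + 1) < (D.bag D.root).card) :
    GoodRoot G D k (P.restrict (D.bag D.root : Set V)) := by
  have hext : IsLegalExtension G D D.root (P.restrict (D.bag D.root : Set V)) P :=
    ⟨D.Vsub_root ▸ hP, hL, P.compatible_restrict _ _⟩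
  have hsize := (psize_le_ncard hext).trans hX
  exact ⟨fun i => by have := hbal i; change (P.C i ∩ _).ncard + _ < _; omega, hsize⟩

theorem exists_goodRoot {κ : Type} [Finite κ] {k : ℕ} (D' : RootedTD V G κ)
    (hk : ∀ x, (D'.bag x).card ≤ k + 1) (hroot : 2 * (k + 1) < (D.bag D.root).card) :
    ∃ P : Part4 V, P.IsPartitionOf Set.univ ∧ P.Legal G ∧
      GoodRoot G D k (P.restrict (D.bag D.root : Set V)) ∧
      ∃ i, ((P.restrict (D.bag D.root : Set V)).C i).Nonempty := by
  obtain ⟨P, hP, hL, ⟨t, hX⟩, hbal⟩ :=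
    D'.exists_balanced_separator (D.bag D.root) (Finset.card_pos.mp (by omega))
  have hXk : P.X.ncard ≤ k + 1 := by rw [hX, Set.ncard_coe_finset]; exact hk t
  exact ⟨P, hP, hL, goodRoot_restrict hP hL hXk hbal hroot,
    Part4.exists_C_inter_nonempty hP (hX ▸ (D'.bag t).finite_toSet) (by omega)⟩

end GoodPartitions

namespace RootedTD

variable {V ι : Type} {G : SimpleGraph V} (D : RootedTD V G ι)

open Classical in
/-- The `else` branch is never taken along `split`, by `exists_goodWrt_isLabel`. -/
noncomputable def splitStep (y : ι) (q : Part4 V × Finset (Fin 3)) : Part4 V × Finset (Fin 3) :=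
  if h : ∃ q' : Part4 V × Finset (Fin 3), GoodWrt G D y q'.1 q.1 ∧ q'.1.IsLabel q'.2 q.2 then
    h.choose
  else q

open Classical in
noncomputable def split (r : Part4 V × Finset (Fin 3)) (y : ι) : Part4 V × Finset (Fin 3) :=
  if _ : y = D.root then r else D.splitStep y (split r (D.parent y))
termination_by D.depth y
decreasing_by exact D.depth_parent ‹_› ▸ Nat.lt_succ_self _

lemma split_root (r : Part4 V × Finset (Fin 3)) : D.split r D.root = r := by
  rw [split, dif_pos rfl]

theorem split_spec {r : Part4 V × Finset (Fin 3)} (hr : r.1.IsPartitionOf (D.bag D.root : Set V))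
    (hrL : r.1.Legal G) (hra : r.1.IsLabel r.2 r.2) (y : ι) :
    (D.split r y).1.IsPartitionOf (D.bag y : Set V) ∧ (D.split r y).1.Legal G ∧
      (D.split r y).1.IsLabel (D.split r y).2 (D.split r (D.parent y)).2 ∧
      (y ≠ D.root → GoodWrt G D y (D.split r y).1 (D.split r (D.parent y)).1) := by
  induction h : D.depth y using Nat.strong_induction_on generalizing y with
  | _ n ih =>
  by_cases hy : y = D.root
  · subst hy
    rw [D.parent_root, D.split_root]
    exact ⟨hr, hrL, hra, fun h => absurd rfl h⟩
  · obtain ⟨hP, hL, ha, -⟩ := ih _ (h ▸ D.depth_parent hy ▸ Nat.lt_succ_self _) (D.parent y) rfl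
    have hex := exists_goodWrt_isLabel hP hL ha
    have hstep : GoodWrt G D y (D.split r y).1 (D.split r (D.parent y)).1 ∧
        (D.split r y).1.IsLabel (D.split r y).2 (D.split r (D.parent y)).2 := by
      rw [split, dif_neg hy, splitStep, dif_pos hex]
      exact hex.choose_spec
    exact ⟨hstep.1.1, hstep.1.2.1, hstep.2, fun _ => hstep.1⟩

def IsCompatibleFamily (Q : ι → Part4 V) : Prop :=
  ∀ y, (Q y).Compatible (Q (D.parent y)) (D.bag y : Set V) (D.bag (D.parent y) : Set V)

lemma isCompatibleFamily_of_goodWrt {Q : ι → Part4 V}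
    (h : ∀ y, y ≠ D.root → GoodWrt G D y (Q y) (Q (D.parent y))) : D.IsCompatibleFamily Q := by
  intro y
  by_cases hy : y = D.root
  · subst hy
    rw [D.parent_root]
    exact Part4.compatible_self _ _ _
  · exact (h y hy).2.2.1

def glue (Q : ι → Part4 V) : Part4 V :=
  ⟨fun i => {v | ∃ x, v ∈ D.bag x ∧ v ∈ (Q x).C i}, {v | ∃ x, v ∈ D.bag x ∧ v ∈ (Q x).X}⟩

variable {D} {Q : ι → Part4 V}

lemma mem_glue_C_iff (hQ : D.IsCompatibleFamily Q) {v : V} {x : ι} (hv : v ∈ D.bag x)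
    (i : Fin 3) : v ∈ (D.glue Q).C i ↔ v ∈ (Q x).C i :=
  ⟨fun ⟨_, hx', h⟩ => (D.iff_of_mem_bag (fun z => v ∈ (Q z).C i)
    (fun z hz hpz => (hQ z v ⟨hz, hpz⟩).1 i) hx' hv).mp h, fun h => ⟨x, hv, h⟩⟩

lemma mem_glue_X_iff (hQ : D.IsCompatibleFamily Q) {v : V} {x : ι} (hv : v ∈ D.bag x) :
    v ∈ (D.glue Q).X ↔ v ∈ (Q x).X :=
  ⟨fun ⟨_, hx', h⟩ => (D.iff_of_mem_bag (fun z => v ∈ (Q z).X)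
    (fun z hz hpz => (hQ z v ⟨hz, hpz⟩).2) hx' hv).mp h, fun h => ⟨x, hv, h⟩⟩

lemma glue_restrict (hQ : D.IsCompatibleFamily Q)
    (hpart : ∀ x, (Q x).IsPartitionOf (D.bag x : Set V)) (x : ι) :
    (D.glue Q).restrict (D.bag x : Set V) = Q x := by
  refine Part4.ext (funext fun i => Set.ext fun v => ⟨fun ⟨hv, hvx⟩ => ?_, fun hv => ?_⟩)
    (Set.ext fun v => ⟨fun ⟨hv, hvx⟩ => ?_, fun hv => ?_⟩)
  · exact (mem_glue_C_iff hQ hvx i).mp hv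
  · have hvx := Part4.C_subset (hpart x) i hv
    exact ⟨(mem_glue_C_iff hQ hvx i).mpr hv, hvx⟩
  · exact (mem_glue_X_iff hQ hvx).mp hv
  · have hvx := Part4.X_subset (hpart x) hv
    exact ⟨(mem_glue_X_iff hQ hvx).mpr hv, hvx⟩

lemma glue_isPartitionOf_univ (hQ : D.IsCompatibleFamily Q)
    (hpart : ∀ x, (Q x).IsPartitionOf (D.bag x : Set V)) :
    (D.glue Q).IsPartitionOf Set.univ := by
  refine ⟨fun i j hij => Set.disjoint_left.mpr ?_, fun i => Set.disjoint_left.mpr ?_,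
    Set.eq_univ_of_forall fun v => ?_⟩
  · rintro v ⟨x, hvx, hi⟩ hj
    exact Set.disjoint_left.mp ((hpart x).1 i j hij) hi ((mem_glue_C_iff hQ hvx j).mp hj)
  · rintro v ⟨x, hvx, hi⟩ hX
    exact Part4.not_mem_X_of_mem_C (hpart x) hi ((mem_glue_X_iff hQ hvx).mp hX)
  · obtain ⟨x, hvx⟩ := D.vert_cover v
    rcases Part4.mem_X_or_mem_C (hpart x) (Finset.mem_coe.mpr hvx) with hX | ⟨i, hi⟩
    · exact Or.inl ⟨x, hvx, hX⟩
    · exact Or.inr (Set.mem_iUnion.mpr ⟨i, x, hvx, hi⟩)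

lemma glue_legal (hQ : D.IsCompatibleFamily Q) (hleg : ∀ x, (Q x).Legal G) :
    (D.glue Q).Legal G := by
  intro i j hij u hu v hv hadj
  obtain ⟨z, huz, hvz⟩ := D.edge_cover hadj
  exact hleg z i j hij u ((mem_glue_C_iff hQ huz i).mp hu) v
    ((mem_glue_C_iff hQ hvz j).mp hv) hadj

theorem exists_restrict_eq (hQ : D.IsCompatibleFamily Q)
    (hpart : ∀ x, (Q x).IsPartitionOf (D.bag x : Set V)) (hleg : ∀ x, (Q x).Legal G) :
    ∃ P : Part4 V, P.IsPartitionOf Set.univ ∧ P.Legal G ∧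
      ∀ x, P.restrict (D.bag x : Set V) = Q x :=
  ⟨D.glue Q, glue_isPartitionOf_univ hQ hpart, glue_legal hQ hleg, glue_restrict hQ hpart⟩

end RootedTD

theorem stmt8_general {V ι : Type} (G : SimpleGraph V)
    (D : RootedTD V G ι) (k : ℕ)
    (htw : ∃ (m : ℕ) (D' : RootedTD V G (Fin m)), ∀ x, (D'.bag x).card ≤ k + 1)
    (hroot : 2 * (k + 1) < (D.bag D.root).card) :
    ∃ (P : Part4 V) (a : ι → Finset (Fin 3)),
      P.IsPartitionOf Set.univ ∧ P.Legal G ∧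
      GoodRoot G D k (P.restrict (D.bag D.root : Set V)) ∧
      (∀ y, y ≠ D.root →
        GoodWrt G D y (P.restrict (D.bag y : Set V))
          (P.restrict (D.bag (D.parent y) : Set V))) ∧
      (∀ x, (a x).Nonempty) ∧
      (∀ x, (∃ i, (P.C i ∩ (D.bag x : Set V)).Nonempty) →
          ∀ i, i ∈ a x ↔ (P.C i ∩ (D.bag x : Set V)).Nonempty) ∧
      (∀ x, ¬ (∃ i, (P.C i ∩ (D.bag x : Set V)).Nonempty) →
          ∃ i ∈ a (D.parent x), a x = {i}) ∧
      (∀ x, a x ⊆ a (D.parent x)) := by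
  obtain ⟨m, D', hk⟩ := htw
  obtain ⟨P₀, hP₀, hL₀, hgood₀, hne₀⟩ := exists_goodRoot D' hk hroot
  let R := P₀.restrict (D.bag D.root : Set V)
  obtain ⟨a₀, ha₀⟩ := R.exists_isLabel_self hne₀
  have hspec := D.split_spec (r := (R, a₀))
    (by simpa using Part4.restrict_isPartitionOf (B := (D.bag D.root : Set V)) hP₀)
    (Part4.restrict_legal hL₀) ha₀
  let q := D.split (R, a₀)
  obtain ⟨P, hP, hL, hPq⟩ := RootedTD.exists_restrict_eq (Q := fun x => (q x).1)
    (D.isCompatibleFamily_of_goodWrt fun y hy => (hspec y).2.2.2 hy)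
    (fun x => (hspec x).1) (fun x => (hspec x).2.1)
  have hlabel x := (hspec x).2.2.1
  have hC x i : P.C i ∩ (D.bag x : Set V) = (q x).1.C i := congrArg (·.C i) (hPq x)
  refine ⟨P, fun x => (q x).2, hP, hL, ?_, fun y hy => ?_, fun x => (hlabel x).nonempty,
    ?_, ?_, fun x => (hlabel x).subset⟩
  · rw [hPq, show q D.root = (R, a₀) from D.split_root _]
    exact hgood₀
  · rw [hPq, hPq]
    exact (hspec y).2.2.2 hy
  · simpa only [hC] using fun x => (hlabel x).mem_iff
  · simpa only [hC] using fun x => (hlabel x).eq_singleton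

/-- if tw(G) ≤ k and the root bag has size more than 2(k+1), then a
split of the tree decomposition exists: a good partition P of V together with a
labeling a of the nodes by nonempty subsets of {1,2,3} satisfying (a) and (b). -/
theorem stmt8 {V ι : Type} [Fintype V] [DecidableEq V] (G : SimpleGraph V)
    (D : RootedTD V G ι) (k : ℕ)
    (htw : ∃ (m : ℕ) (D' : RootedTD V G (Fin m)), ∀ x, (D'.bag x).card ≤ k + 1)
    (hroot : 2 * (k + 1) < (D.bag D.root).card) :
    ∃ (P : Part4 V) (a : ι → Finset (Fin 3)),
      P.IsPartitionOf Set.univ ∧ P.Legal G ∧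
      GoodRoot G D k (P.restrict (D.bag D.root : Set V)) ∧
      (∀ y, y ≠ D.root →
        GoodWrt G D y (P.restrict (D.bag y : Set V))
          (P.restrict (D.bag (D.parent y) : Set V))) ∧
      (∀ x, (a x).Nonempty) ∧
      (∀ x, (∃ i, (P.C i ∩ (D.bag x : Set V)).Nonempty) →
          ∀ i, i ∈ a x ↔ (P.C i ∩ (D.bag x : Set V)).Nonempty) ∧
      (∀ x, ¬ (∃ i, (P.C i ∩ (D.bag x : Set V)).Nonempty) →
          ∃ i ∈ a (D.parent x), a x = {i}) ∧
      (∀ x, a x ⊆ a (D.parent x)) :=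
  stmt8_general G D k htw hroot
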